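/- Let D be the dictionary formed by the q+1 mutually unbiased bases B_b (b ∈ F_q ∪ {∞}) constructed from the net and permuted Hadamard matrix. Define the (q+1)-sparse vector x whose block indexed by b ∈ F_q is e_{b²} ⊗ e_b, and whose block indexed by ∞ is −e_0 ⊗ e_0. Then Dx = 0; in particular the spark of D is at most q+1. -/

import Mathlib

/-!
In characteristic 2 squaring is a bijection of `F_q`, and `b ↦ b + u` preserves `b u + b²`.
Row `(u, w)` of `D x` is, up to the factor `1/√q`, the sum of `H̃_{u,b}` over the `b` with
`b u + b² = w`, minus `H̃_{w,0} [u = 0]`. For `u = 0` the sum has the single term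
`H̃_{0,√w} = 1`, matching the block at `∞`. For `u ≠ 0` the summand is antiperiodic with
antiperiod `u`, because `H̃_{u,b+u} = -H̃_{u,b}` as `b + (b + u) = u`, so the sum vanishes.
-/

open Finset Function

theorem Function.Antiperiodic.sum_eq_zero {G M : Type*} [AddGroup G] [Fintype G] [AddCommGroup M]
    [IsAddTorsionFree M] {f : G → M} {c : G} (hf : Antiperiodic f c) : ∑ x, f x = 0 := by
  have hshift : ∑ x, f (x + c) = ∑ x, f x := Equiv.sum_comp (Equiv.addRight c) f
  simp only [hf _, sum_neg_distrib, neg_eq_iff_add_eq_zero, ← two_nsmul] at hshift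
  exact nsmul_right_injective two_ne_zero (hshift.trans (nsmul_zero 2).symm)

section CharTwo

variable {F : Type*} [Field F] [CharP F 2]

theorem CharTwo.mul_self_bijective [Finite F] : Bijective fun b : F => b * b := by
  have hfrob : ⇑(frobenius F 2) = fun b => b * b := funext fun b => by rw [frobenius_def, sq]
  exact hfrob ▸ bijective_frobenius F 2

theorem Function.Antiperiodic.ite_eq_mul_add_mul_self [DecidableEq F] {M : Type*}
    [AddCommGroup M] {f : F → M} {u : F} (hf : Antiperiodic f u) (w : F) :
    Antiperiodic (fun b => if w = b * u + b * b then f b else 0) u := by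
  intro b
  have hquad : (b + u) * u + (b + u) * (b + u) = b * u + b * b := by
    linear_combination (b * u + u * u) * CharTwo.two_eq_zero (R := F)
  simp only [hquad, hf b]
  split_ifs <;> simp

theorem sum_ite_eq_mul_add_mul_self [Fintype F] [DecidableEq F] (Ht : F → F → ℝ)
    (hrow0 : ∀ j : F, Ht 0 j = 1)
    (hneg : ∀ i j₁ j₂ : F, i ≠ 0 → j₁ + j₂ = i → Ht i j₁ = - Ht i j₂) (u w : F) :
    ∑ b, (if w = b * u + b * b then Ht u b else 0) = if u = 0 then 1 else 0 := by
  split_ifs with hu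
  · subst hu
    simp only [mul_zero, zero_add, hrow0]
    exact (CharTwo.mul_self_bijective.sum_comp fun a => if w = a then (1 : ℝ) else 0).trans
      (Fintype.sum_ite_eq w _)
  · have hanti : Antiperiodic (Ht u) u := fun b =>
      hneg u (b + u) b hu (by rw [add_comm, ← add_assoc, CharTwo.add_self_eq_zero, zero_add])
    exact (hanti.ite_eq_mul_add_mul_self w).sum_eq_zero

end CharTwo

section NullVector

variable {F : Type*} [Field F]

def nullVectorSupport : Option F → Option F × F × F
  | some b => (some b, b * b, b)
  | none => (none, 0, 0)

theorem nullVectorSupport_injective : Injective (nullVectorSupport (F := F)) := by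
  rintro (_ | a) (_ | b) <;> simp [nullVectorSupport]

variable [DecidableEq F]

def nullVector : Option F × F × F → ℝ := fun c =>
  match c with
  | (some b, j, v) => if j = b * b ∧ v = b then 1 else 0
  | (none, j, v) => if j = 0 ∧ v = 0 then -1 else 0

theorem nullVector_ne_zero : nullVector (F := F) ≠ 0 := fun h => by
  simpa [nullVector] using congrFun h (none, 0, 0)

variable [Fintype F]

theorem filter_nullVector_ne_zero :
    ({c | nullVector c ≠ 0} : Finset _) = univ.image (nullVectorSupport (F := F)) := by
  ext ⟨_ | b, j, v⟩ <;> simp [nullVector, nullVectorSupport, Option.exists, eq_comm, and_comm]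

theorem card_filter_nullVector_ne_zero :
    #{c | nullVector (F := F) c ≠ 0} = Fintype.card F + 1 := by
  rw [filter_nullVector_ne_zero, card_image_of_injective _ nullVectorSupport_injective, card_univ,
    Fintype.card_option]

theorem sum_mul_nullVector (g : Option F × F × F → ℝ) :
    ∑ c, g c * nullVector c = ∑ b, g (some b, b * b, b) - g (none, 0, 0) := by
  simp [nullVector, Fintype.sum_option, Fintype.sum_prod_type, ite_and, sub_eq_neg_add]

-- Column `(b, j, v)` is the column of `B_b` indexed by `(j, v)`, with `none` standing for `∞`.
noncomputable def mubDictionary (Ht : F → F → ℝ) : F × F → Option F × F × F → ℝ := fun p c =>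
  match c with
  | (some b, j, v) => if p.2 = b * p.1 + j then Ht p.1 v / Real.sqrt (Fintype.card F) else 0
  | (none, j, v) => if p.1 = j then Ht p.2 v / Real.sqrt (Fintype.card F) else 0

theorem sum_mubDictionary_mul_nullVector [CharP F 2] (Ht : F → F → ℝ)
    (hrow0 : ∀ j : F, Ht 0 j = 1) (hcol0 : ∀ i : F, Ht i 0 = 1)
    (hneg : ∀ i j₁ j₂ : F, i ≠ 0 → j₁ + j₂ = i → Ht i j₁ = - Ht i j₂) (p : F × F) :
    ∑ c, mubDictionary Ht p c * nullVector c = 0 := by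
  rw [sum_mul_nullVector]
  simp only [mubDictionary, hcol0, div_eq_mul_inv, ← ite_zero_mul]
  rw [← sum_mul, sum_ite_eq_mul_add_mul_self Ht hrow0 hneg, sub_self]

end NullVector

theorem explicit_null_vector (m : ℕ)
    (F : Type) [Field F] [Fintype F] [DecidableEq F]
    (hF : Fintype.card F = 2 ^ m)
    (Ht : F → F → ℝ)
    (hrow0 : ∀ j : F, Ht 0 j = 1)
    (hcol0 : ∀ i : F, Ht i 0 = 1)
    (hneg : ∀ i j₁ j₂ : F, i ≠ 0 → j₁ + j₂ = i → Ht i j₁ = - Ht i j₂) :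
    let q : ℝ := Fintype.card F
    let D : (F × F) → (Option F × F × F) → ℝ := fun p c =>
      match c with
      | (some b, j, v) => if p.2 = b * p.1 + j then Ht p.1 v / Real.sqrt q else 0
      | (none, j, v) => if p.1 = j then Ht p.2 v / Real.sqrt q else 0
    let x : (Option F × F × F) → ℝ := fun c =>
      match c with
      | (some b, j, v) => if j = b * b ∧ v = b then 1 else 0
      | (none, j, v) => if j = 0 ∧ v = 0 then -1 else 0
    x ≠ 0 ∧
    (Finset.univ.filter fun c => x c ≠ 0).card = 2 ^ m + 1 ∧
    (∀ p : F × F, ∑ c : Option F × F × F, D p c * x c = 0) := by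
  have : CharP F 2 := charP_of_card_eq_prime_pow hF
  exact ⟨nullVector_ne_zero, hF ▸ card_filter_nullVector_ne_zero,
    sum_mubDictionary_mul_nullVector Ht hrow0 hcol0 hneg⟩
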